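/- Let f : {0,1} → ℝ be a nonzero nonnegative function on the one-dimensional Hamming cube. Then D²(f) = 4 · K²(f) · φ(Ent(f²)/K²(f)), where D²(f) = E_x Σ_{y∼x} (f(x) − f(y))², K²(f) = (1/4) · E_x Σ_{y∼x} (f(x) + f(y))², and φ : [0, 2 log 2] → [0,1] is the inverse of ψ. -/

import Mathlib

/-- Expectation of `g` over the uniform measure on the Hamming cube `{0,1}^n`. -/
noncomputable def cubeE (n : ℕ) (g : (Fin n → Bool) → ℝ) : ℝ :=
  (∑ x : Fin n → Bool, g x) / 2 ^ n

/-- `E_x ∑_{y ∼ x} (f x - f y)^2` on the Hamming cube `{0,1}^n`. -/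
noncomputable def cubeD2 (n : ℕ) (f : (Fin n → Bool) → ℝ) : ℝ :=
  cubeE n (fun x => ∑ i : Fin n, (f x - f (Function.update x i (!x i))) ^ 2)

/-- `Ent(f²) = E[f² log f²] - E[f²] log E[f²]` (note `Real.log 0 = 0`). -/
noncomputable def cubeEnt (n : ℕ) (f : (Fin n → Bool) → ℝ) : ℝ :=
  cubeE n (fun x => f x ^ 2 * Real.log (f x ^ 2)) -
    cubeE n (fun x => f x ^ 2) * Real.log (cubeE n (fun x => f x ^ 2))

/-- `K²(f) = (1/4)·E_x ∑_{y∼x} (f x + f y)²` on the Hamming cube `{0,1}^n`. -/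
noncomputable def cubeK2 (n : ℕ) (f : (Fin n → Bool) → ℝ) : ℝ :=
  (1 / 4) * cubeE n (fun x => ∑ i : Fin n, (f x + f (Function.update x i (!x i))) ^ 2)

/-- `ψ(t) = (1/2)(1−√t)² log((1−√t)²) + (1/2)(1+√t)² log((1+√t)²) − (1+t) log(1+t)`
(note `Real.log 0 = 0`). -/
noncomputable def psi (t : ℝ) : ℝ :=
  (1 / 2) * (1 - Real.sqrt t) ^ 2 * Real.log ((1 - Real.sqrt t) ^ 2) +
    (1 / 2) * (1 + Real.sqrt t) ^ 2 * Real.log ((1 + Real.sqrt t) ^ 2) -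
    (1 + t) * Real.log (1 + t)

/-! On `{0,1}` let `a, b ≥ 0` be the two values of `f`. Then `D²(f) = (a - b)²`,
`K²(f) = (a + b)²/4`, and `Ent(f²)` is the two-point entropy of `(a², b²)`. The two-point
entropy is homogeneous of degree one, and `ψ(s²)` is the two-point entropy of
`((1 - s)², (1 + s)²)`. For `s = (a - b)/(a + b)` this pair is `4/(a + b)² · (b², a²)`, so
`Ent(f²) = K²(f) · ψ(D²(f)/(4K²(f)))`, and applying `φ` gives the identity. -/

open Real

lemma sum_fun_unique_bool {ι : Type*} [Unique ι] [Fintype (ι → Bool)] {M : Type*}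
    [AddCommMonoid M] (g : (ι → Bool) → M) :
    ∑ x : ι → Bool, g x = g (fun _ => false) + g (fun _ => true) := by
  rw [← (Equiv.funUnique ι Bool).symm.sum_comp, Fintype.sum_bool, add_comm]
  rfl

lemma cubeE_one (g : (Fin 1 → Bool) → ℝ) :
    cubeE 1 g = (g (fun _ => false) + g (fun _ => true)) / 2 := by
  rw [cubeE, sum_fun_unique_bool, pow_one]

lemma cubeD2_one (f : (Fin 1 → Bool) → ℝ) :
    cubeD2 1 f = (f (fun _ => false) - f (fun _ => true)) ^ 2 := by
  simp only [cubeD2, cubeE_one, Fin.sum_univ_one, Function.update_eq_const_of_subsingleton]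
  simp only [Function.const_def, Bool.not_false, Bool.not_true]
  ring

lemma cubeK2_one (f : (Fin 1 → Bool) → ℝ) :
    cubeK2 1 f = (f (fun _ => false) + f (fun _ => true)) ^ 2 / 4 := by
  simp only [cubeK2, cubeE_one, Fin.sum_univ_one, Function.update_eq_const_of_subsingleton]
  simp only [Function.const_def, Bool.not_false, Bool.not_true]
  ring

/-- `Ent(g)` for the function `g` on `{0,1}` with values `x` and `y`. -/
noncomputable def binaryEnt (x y : ℝ) : ℝ :=
  negMulLog ((x + y) / 2) - (negMulLog x + negMulLog y) / 2

lemma binaryEnt_comm (x y : ℝ) : binaryEnt x y = binaryEnt y x := by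
  rw [binaryEnt, binaryEnt, add_comm x, add_comm (negMulLog x)]

lemma binaryEnt_mul (c x y : ℝ) : binaryEnt (c * x) (c * y) = c * binaryEnt x y := by
  simp only [binaryEnt, ← mul_add, mul_div_assoc, negMulLog_mul]
  ring

lemma cubeEnt_one (f : (Fin 1 → Bool) → ℝ) :
    cubeEnt 1 f = binaryEnt (f (fun _ => false) ^ 2) (f (fun _ => true) ^ 2) := by
  simp only [cubeEnt, cubeE_one, binaryEnt, negMulLog]
  ring

lemma psi_sq (s : ℝ) : psi (s ^ 2) = binaryEnt ((1 - s) ^ 2) ((1 + s) ^ 2) := by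
  have hmean : ((1 - s) ^ 2 + (1 + s) ^ 2) / 2 = 1 + s ^ 2 := by ring
  rw [binaryEnt, hmean, psi, sqrt_sq_eq_abs]
  rcases abs_choice s with h | h <;> simp only [negMulLog, h] <;> ring_nf

lemma binaryEnt_sq_eq_mul_psi (a b : ℝ) (hab : a + b ≠ 0) :
    binaryEnt (a ^ 2) (b ^ 2) = (a + b) ^ 2 / 4 * psi (((a - b) / (a + b)) ^ 2) := by
  have hb : (1 - (a - b) / (a + b)) ^ 2 = 4 / (a + b) ^ 2 * b ^ 2 := by field_simp; ring
  have ha : (1 + (a - b) / (a + b)) ^ 2 = 4 / (a + b) ^ 2 * a ^ 2 := by field_simp; ring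
  rw [psi_sq, hb, ha, binaryEnt_mul, binaryEnt_comm]
  field_simp

lemma sq_sub_div_add_mem_Icc {a b : ℝ} (ha : 0 ≤ a) (hb : 0 ≤ b) :
    ((a - b) / (a + b)) ^ 2 ∈ Set.Icc (0 : ℝ) 1 := by
  refine ⟨sq_nonneg _, ?_⟩
  rw [div_pow]
  exact div_le_one_of_le₀ (by nlinarith [mul_nonneg ha hb]) (sq_nonneg _)

theorem D2_eq_of_phi_dim_one_general
    (f : (Fin 1 → Bool) → ℝ) (hf : f ≠ 0) (hfpos : ∀ x, 0 ≤ f x)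
    (φ : ℝ → ℝ)
    (hφleft : ∀ t ∈ Set.Icc (0 : ℝ) 1, φ (psi t) = t) :
    cubeD2 1 f = 4 * cubeK2 1 f * φ (cubeEnt 1 f / cubeK2 1 f) := by
  have hab : f (fun _ => false) + f (fun _ => true) ≠ 0 := by
    rw [← sum_fun_unique_bool]
    exact mt (Fintype.sum_eq_zero_iff_of_nonneg hfpos).1 hf
  have hK : cubeK2 1 f ≠ 0 := by rw [cubeK2_one]; positivity
  rw [cubeD2_one, cubeEnt_one, binaryEnt_sq_eq_mul_psi _ _ hab, ← cubeK2_one,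
    mul_div_cancel_left₀ _ hK, hφleft _ (sq_sub_div_add_mem_Icc (hfpos _) (hfpos _)),
    cubeK2_one]
  field_simp

/-- For a nonzero nonnegative `f` on the one-dimensional Hamming cube `{0,1}`,
`D²(f) = 4·K²(f)·φ(Ent(f²)/K²(f))`, where `φ : [0, 2 log 2] → [0,1]` is the
inverse of `ψ`. -/
theorem D2_eq_of_phi_dim_one
    (f : (Fin 1 → Bool) → ℝ) (hf : f ≠ 0) (hfpos : ∀ x, 0 ≤ f x)
    (φ : ℝ → ℝ)
    (hφmem : ∀ y ∈ Set.Icc (0 : ℝ) (2 * Real.log 2), φ y ∈ Set.Icc (0 : ℝ) 1)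
    (hφright : ∀ y ∈ Set.Icc (0 : ℝ) (2 * Real.log 2), psi (φ y) = y)
    (hφleft : ∀ t ∈ Set.Icc (0 : ℝ) 1, φ (psi t) = t) :
    cubeD2 1 f = 4 * cubeK2 1 f * φ (cubeEnt 1 f / cubeK2 1 f) :=
  D2_eq_of_phi_dim_one_general f hf hfpos φ hφleft
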